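/- Let (Ω, μ) be a measure space, ι a nonempty directed preorder, and f, g : ι → (Ω →ₘ[μ] ℝ) nets of a.e.-equivalence classes of real-valued measurable functions such that g is antitone, 0 is the greatest lower bound of the range of g in the a.e. order (IsGLB (Set.range g) 0), and |f i| ≤ g i a.e. for every i ∈ ι. Then for every measurable set B with μ B < ∞, the net f converges to 0 in measure with respect to the restricted measure μ.restrict B, along the atTop filter on ι. -/

import Mathlib

/-!
Fix `ε > 0` and look at the sets `A i = B ∩ {ε ≤ g i}`, which decrease a.e. and have finite
measure. Along a suitable increasing sequence of indices their measures approach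
`t = ⨅ i, μ (A i)`, and the intersection `S` along that sequence has measure `t`. Comparing with
the sequence pushed above any given `i` shows that `S ⊆ A i` a.e. for every `i`, so `ε • 𝟙_S` is a
lower bound of the `g i`; as `0` is the greatest one, `μ S = 0`, hence `t = 0`. Finally
`|f i| ≤ g i` puts `B ∩ {ε ≤ |f i|}` inside `A i` a.e.
-/

open MeasureTheory Filter Topology
open scoped ENNReal

section Sequences

variable {ι : Type*} [Preorder ι] [IsDirected ι (· ≤ ·)]

theorem exists_monotone_seq_ge (j : ℕ → ι) : ∃ s : ℕ → ι, Monotone s ∧ ∀ n, j n ≤ s n := by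
  choose c hleft hright using exists_ge_ge (α := ι)
  let s : ℕ → ι := fun n => Nat.rec (j 0) (fun k x => c x (j (k + 1))) n
  refine ⟨s, monotone_nat_of_le_succ fun n => hleft _ _, fun n => ?_⟩
  cases n with
  | zero => exact le_rfl
  | succ n => exact hright _ _

theorem Antitone.exists_monotone_iInf_comp_eq {α : Type*} [CompleteLinearOrder α]
    [TopologicalSpace α] [OrderTopology α] [FirstCountableTopology α] {m : ι → α}
    [Nonempty ι] (hm : Antitone m) : ∃ s : ℕ → ι, Monotone s ∧ ⨅ n, m (s n) = ⨅ i, m i := by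
  obtain ⟨u, -, hu, hu_mem⟩ :=
    exists_seq_tendsto_sInf (Set.range_nonempty m) (OrderBot.bddBelow _)
  choose j hj using hu_mem
  obtain ⟨s, hs, hjs⟩ := exists_monotone_seq_ge j
  refine ⟨s, hs, le_antisymm ?_ (le_iInf fun n => iInf_le _ _)⟩
  rw [← sInf_range]
  exact ge_of_tendsto' hu fun n => (iInf_le _ n).trans (hj n ▸ hm (hjs n))

end Sequences

section AEAntitone

variable {Ω ι : Type*} [MeasurableSpace Ω] {μ : Measure Ω} [Preorder ι] {A : ι → Set Ω}

theorem measure_iInter_comp_of_ae_antitone (hA : ∀ i, MeasurableSet (A i))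
    (hanti : ∀ ⦃i j⦄, i ≤ j → A j ≤ᵐ[μ] A i) {s : ℕ → ι} (hs : Monotone s)
    (hfin : ∃ n, μ (A (s n)) ≠ ∞) : μ (⋂ n, A (s n)) = ⨅ n, μ (A (s n)) := by
  refine measure_iInter_of_ae_antitone ?_ (fun n => (hA _).nullMeasurableSet) hfin
  have h : ∀ᵐ ω ∂μ, ∀ n, ω ∈ A (s (n + 1)) → ω ∈ A (s n) :=
    ae_all_iff.2 fun n => hanti (hs n.le_succ)
  filter_upwards [h] with ω hω using antitone_nat_of_succ_le hω

theorem measure_iInter_comp_eq_iInf_of_monotone (hA : ∀ i, MeasurableSet (A i))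
    (hanti : ∀ ⦃i j⦄, i ≤ j → A j ≤ᵐ[μ] A i) {s : ℕ → ι} (hs : Monotone s)
    (hmin : ⨅ n, μ (A (s n)) = ⨅ i, μ (A i)) (hfin : ⨅ i, μ (A i) ≠ ∞) :
    μ (⋂ n, A (s n)) = ⨅ i, μ (A i) := by
  refine (measure_iInter_comp_of_ae_antitone hA hanti hs ?_).trans hmin
  obtain ⟨n, hn⟩ := iInf_lt_iff.mp (hmin.symm ▸ hfin.lt_top)
  exact ⟨n, hn.ne⟩

variable [IsDirected ι (· ≤ ·)]

theorem iInter_comp_ae_le_of_monotone (hA : ∀ i, MeasurableSet (A i))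
    (hanti : ∀ ⦃i j⦄, i ≤ j → A j ≤ᵐ[μ] A i) {s : ℕ → ι} (hs : Monotone s)
    (hmin : ⨅ n, μ (A (s n)) = ⨅ i, μ (A i)) (hfin : ⨅ i, μ (A i) ≠ ∞) (i : ι) :
    ⋂ n, A (s n) ≤ᵐ[μ] A i := by
  choose k hk_s hk_i using fun n => exists_ge_ge (s n) i
  obtain ⟨s', hs', hks'⟩ := exists_monotone_seq_ge k
  have hss' : ∀ n, s n ≤ s' n := fun n => (hk_s n).trans (hks' n)
  have hmin' : ⨅ n, μ (A (s' n)) = ⨅ i, μ (A i) :=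
    le_antisymm ((iInf_mono fun n => measure_mono_ae (hanti (hss' n))).trans hmin.le)
      (le_iInf fun n => iInf_le _ _)
  -- The intersection along `s'` lies a.e. inside the one along `s` and has the same finite
  -- measure, so the two agree a.e.; but the former also lies a.e. inside `A i`.
  have hss'_ae : ⋂ n, A (s n) =ᵐ[μ] ⋂ n, A (s' n) := by
    refine (ae_eq_of_ae_subset_of_measure_ge
      (Filter.EventuallyLE.countable_iInter fun n => hanti (hss' n)) ?_
      (MeasurableSet.iInter fun n => hA _).nullMeasurableSet ?_).symm
    · rw [measure_iInter_comp_eq_iInf_of_monotone hA hanti hs hmin hfin,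
        measure_iInter_comp_eq_iInf_of_monotone hA hanti hs' hmin' hfin]
    · rwa [measure_iInter_comp_eq_iInf_of_monotone hA hanti hs hmin hfin]
  exact hss'_ae.le.trans ((Set.iInter_subset _ 0).eventuallyLE.trans
    (hanti ((hk_i 0).trans (hks' 0))))

theorem tendsto_measure_atTop_zero_of_ae_antitone (hA : ∀ i, MeasurableSet (A i))
    (hfin : ∃ i, μ (A i) ≠ ∞) (hanti : ∀ ⦃i j⦄, i ≤ j → A j ≤ᵐ[μ] A i)
    (hnull : ∀ S, MeasurableSet S → (∀ i, S ≤ᵐ[μ] A i) → μ S = 0) :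
    Tendsto (fun i => μ (A i)) atTop (𝓝 0) := by
  obtain ⟨i₀, hi₀⟩ := hfin
  have : Nonempty ι := ⟨i₀⟩
  have hmono : Antitone fun i => μ (A i) := fun i j hij => measure_mono_ae (hanti hij)
  obtain ⟨s, hs, hmin⟩ := hmono.exists_monotone_iInf_comp_eq
  have hinf_fin : ⨅ i, μ (A i) ≠ ∞ := ne_top_of_le_ne_top hi₀ (iInf_le _ i₀)
  have hinf_zero : ⨅ i, μ (A i) = 0 := by
    rw [← measure_iInter_comp_eq_iInf_of_monotone hA hanti hs hmin hinf_fin]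
    exact hnull _ (MeasurableSet.iInter fun n => hA _)
      (iInter_comp_ae_le_of_monotone hA hanti hs hmin hinf_fin)
  exact hinf_zero ▸ tendsto_atTop_iInf hmono

end AEAntitone

namespace MeasureTheory.AEEqFun

variable {Ω β : Type*} [MeasurableSpace Ω] {μ : Measure Ω} [TopologicalSpace β] [Zero β]

theorem mk_indicator_const_le [Preorder β] {h : Ω →ₘ[μ] β} {S : Set Ω} (hS : MeasurableSet S)
    {c : β} (h0 : 0 ≤ h) (hSh : S ≤ᵐ[μ] {ω | c ≤ h ω}) :
    mk (S.indicator fun _ => c) (aestronglyMeasurable_const.indicator hS) ≤ h := by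
  rw [← coeFn_le]
  filter_upwards [coeFn_mk (S.indicator fun _ => c) (aestronglyMeasurable_const.indicator hS),
    hSh, coeFn_le.mpr h0, coeFn_zero (μ := μ) (β := β)] with ω hmk hc hpos hzero
  rw [hmk]
  by_cases hω : ω ∈ S
  · simpa [hω] using (show c ≤ h ω from hc hω)
  · simpa [hω, hzero] using hpos

theorem measure_eq_zero_of_mk_indicator_const_nonpos [PartialOrder β] {S : Set Ω}
    (hS : MeasurableSet S) {c : β} (hc : 0 < c)
    (hle : mk (S.indicator fun _ => c) (aestronglyMeasurable_const.indicator hS) ≤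
      (0 : Ω →ₘ[μ] β)) :
    μ S = 0 := by
  rw [measure_eq_zero_iff_ae_notMem]
  filter_upwards [coeFn_le.mpr hle,
    coeFn_mk (S.indicator fun _ => c) (aestronglyMeasurable_const.indicator hS),
    coeFn_zero (μ := μ) (β := β)] with ω hω hmk hzero hmem
  rw [hmk, hzero, Set.indicator_of_mem hmem] at hω
  exact hω.not_gt hc

end MeasureTheory.AEEqFun

/-- If `g : ι → (Ω →ₘ[μ] ℝ)` is an antitone net with greatest lower bound `0` and
`|f i| ≤ g i` a.e. for every `i`, then `f` converges to `0` in measure on every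
measurable set of finite measure (Proposition 1 of the paper, commutative case). -/
theorem tendstoInMeasure_restrict_of_order_dominated
    {Ω : Type*} [MeasurableSpace Ω] {μ : Measure Ω}
    {ι : Type*} [Preorder ι] [Nonempty ι] [IsDirected ι (· ≤ ·)]
    (f g : ι → Ω →ₘ[μ] ℝ) (hg : Antitone g) (h0 : IsGLB (Set.range g) 0)
    (hfg : ∀ i, ∀ᵐ ω ∂μ, |f i ω| ≤ g i ω) :
    ∀ B : Set Ω, MeasurableSet B → μ B < ∞ →
      TendstoInMeasure (μ.restrict B) (fun i => ⇑(f i)) atTop 0 := by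
  intro B hB hBfin
  rw [tendstoInMeasure_iff_dist]
  intro ε hε
  set A : ι → Set Ω := fun i => B ∩ {ω | ε ≤ g i ω}
  have hA : Tendsto (fun i => μ (A i)) atTop (𝓝 0) := by
    refine tendsto_measure_atTop_zero_of_ae_antitone
      (fun i => hB.inter (measurableSet_le measurable_const (g i).measurable))
      ⟨Classical.arbitrary ι, (measure_mono Set.inter_subset_left |>.trans_lt hBfin).ne⟩
      (fun i j hij => ?_) (fun S hS hSA => ?_)
    · filter_upwards [AEEqFun.coeFn_le.mpr (hg hij)] with ω hω hmem
      exact ⟨hmem.1, hmem.2.trans hω⟩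
    · refine AEEqFun.measure_eq_zero_of_mk_indicator_const_nonpos hS hε (h0.2 ?_)
      rintro _ ⟨i, rfl⟩
      exact AEEqFun.mk_indicator_const_le hS (h0.1 ⟨i, rfl⟩)
        ((hSA i).trans (Set.inter_subset_right.eventuallyLE))
  refine tendsto_of_tendsto_of_tendsto_of_le_of_le tendsto_const_nhds hA (fun _ => zero_le)
    fun i => ?_
  rw [Measure.restrict_apply' hB]
  refine measure_mono_ae ?_
  filter_upwards [hfg i] with ω hω hmem
  exact ⟨hmem.2, (show ε ≤ |f i ω| by simpa [Real.dist_eq] using hmem.1).trans hω⟩
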